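/- arXiv:2603.13058 — 2 statements merged into one kernel-verified Lean document; each statement's English description precedes it below -/
import Mathlib

section
/- With mid(l,r) = ⌊(l+r)/2⌋, the recursively built range tree over [1,n] (root ⟨1,n⟩, children of ⟨l,r⟩ being ⟨l, mid(l,r)⟩ and ⟨mid(l,r)+1, r⟩, leaves when l = r) is strongly balanced: at every internal node, the heights of the two subtrees differ by at most one. -/
inductive RTree : ℕ → ℕ → Type where
  | leaf (l : ℕ) : RTree l l
  | node {l m r : ℕ} (h1 : l ≤ m) (h2 : m < r)
      (L : RTree l m) (R : RTree (m + 1) r) : RTree l r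

def RTree.height : ∀ {l r : ℕ}, RTree l r → ℕ
  | _, _, .leaf _ => 0
  | _, _, .node _ _ L R => 1 + max L.height R.height

/-- Strongly balanced: sibling subtree heights differ by at most one. -/
def RTree.Balanced : ∀ {l r : ℕ}, RTree l r → Prop
  | _, _, .leaf _ => True
  | _, _, .node _ _ L R =>
      L.Balanced ∧ R.Balanced ∧ L.height ≤ R.height + 1 ∧ R.height ≤ L.height + 1

/-- Every internal node splits its range at `mid(l,r) = ⌊(l+r)/2⌋`. -/
def RTree.MidSplit : ∀ {l r : ℕ}, RTree l r → Prop
  | _, _, .leaf _ => True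
  | _, _, @RTree.node l m r _ _ L R =>
      m = (l + r) / 2 ∧ L.MidSplit ∧ R.MidSplit

/-! Splitting a range of `n` points at its midpoint leaves `⌈n/2⌉` points on the left and
`⌊n/2⌋ ≤ ⌈n/2⌉ ≤ ⌊n/2⌋ + 1` on the right. By induction a mid-split tree over `n` points has
height `⌈log₂ n⌉`, and `⌈log₂⌉` is monotone and grows by at most one when its argument grows
by one, so sibling heights differ by at most one. -/

theorem Nat.clog_succ_le_succ (b n : ℕ) : Nat.clog b (n + 1) ≤ Nat.clog b n + 1 := by
  rcases le_or_gt b 1 with hb | hb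
  · simp [Nat.clog_of_left_le_one hb]
  rw [Nat.clog_le_iff_le_pow hb, pow_succ]
  have hn := Nat.le_pow_clog hb n
  have hpos := Nat.one_le_pow (Nat.clog b n) b (by omega)
  nlinarith

namespace RTree

theorem MidSplit.height_eq_clog {l r : ℕ} {T : RTree l r} (hT : T.MidSplit) :
    T.height = Nat.clog 2 (r - l + 1) := by
  induction T with
  | leaf l => simp [height]
  | @node l m r hlm hmr L R ihL ihR =>
    obtain ⟨hm, hL, hR⟩ := hT
    have hLsize : m - l + 1 = (r - l + 2) / 2 := by omega
    have hRsize : r - (m + 1) + 1 = (r - l + 1) / 2 := by omega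
    have hR_le_L : Nat.clog 2 ((r - l + 1) / 2) ≤ Nat.clog 2 ((r - l + 2) / 2) :=
      Nat.clog_mono_right _ (by omega)
    have hceil : (r - l + 1 + 2 - 1) / 2 = (r - l + 2) / 2 := by omega
    rw [height, ihL hL, ihR hR, hLsize, hRsize, max_eq_left hR_le_L,
      Nat.clog_of_two_le one_lt_two (by omega : 2 ≤ r - l + 1), hceil]
    omega

theorem MidSplit.balanced {l r : ℕ} {T : RTree l r} (hT : T.MidSplit) : T.Balanced := by
  induction T with
  | leaf l => trivial
  | @node l m r hlm hmr L R ihL ihR =>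
    obtain ⟨hm, hL, hR⟩ := hT
    rw [Balanced, hL.height_eq_clog, hR.height_eq_clog]
    have hLsize : m - l + 1 = (r - (m + 1) + 1) + (r - l + 1) % 2 := by omega
    have hR_le_L : Nat.clog 2 (r - (m + 1) + 1) ≤ Nat.clog 2 (m - l + 1) :=
      Nat.clog_mono_right _ (by omega)
    have hL_le_R : Nat.clog 2 (m - l + 1) ≤ Nat.clog 2 (r - (m + 1) + 1) + 1 :=
      (Nat.clog_mono_right _ (by omega)).trans (Nat.clog_succ_le_succ 2 _)
    exact ⟨ihL hL, ihR hR, by omega, by omega⟩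

theorem exists_midSplit (l r : ℕ) (h : l ≤ r) : ∃ T : RTree l r, T.MidSplit := by
  rcases h.eq_or_lt with rfl | hlt
  · exact ⟨leaf l, trivial⟩
  · have hl : l ≤ (l + r) / 2 := by omega
    have hr : (l + r) / 2 < r := by omega
    obtain ⟨L, hL⟩ := exists_midSplit l ((l + r) / 2) hl
    obtain ⟨R, hR⟩ := exists_midSplit ((l + r) / 2 + 1) r hr
    exact ⟨node hl hr L R, rfl, hL, hR⟩
termination_by r - l

end RTree

/-- With `mid(l,r) = ⌊(l+r)/2⌋`, the recursively built range tree over any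
range exists, and every range tree built with this middle-point function is
strongly balanced. -/
theorem midsplit_balanced :
    (∀ l r : ℕ, l ≤ r → ∃ T : RTree l r, T.MidSplit) ∧
    (∀ (l r : ℕ) (T : RTree l r), T.MidSplit → T.Balanced) :=
  ⟨RTree.exists_midSplit, fun _ _ _ hT => hT.balanced⟩
end

section
/- Decomposition of any interval into tree ranges: Let T be the range tree over [1,n] built with mid(l,r) = ⌊(l+r)/2⌋. Then for any 1 ≤ a ≤ b ≤ n, the interval [a,b] can be written as a disjoint concatenation of at most 2·⌈log_2 n⌉ + 2 ranges each of which labels a node of T, listed in increasing order. -/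
/-!
Descend the tree. A query lying inside one child is answered there; otherwise it splits at the
midpoint into a suffix of the left child and a prefix of the right child. A suffix query `[a, r]`
on a node `⟨l, r⟩` is either the whole node, or a suffix query in the left child followed by the
whole right child, or a suffix query in the right child; so it uses at most one range per level,
i.e. at most `⌈log₂ (r + 1 - l)⌉ + 1` ranges, and symmetrically for prefixes. Each child has at
most half (rounded up) the size of its parent, which is what lets `⌈log₂⌉` drop by one per level.
-/

/-- `MidNode l r a b`: the range `[a,b]` labels a node of the range tree over
`[l,r]` built with `mid(l,r) = ⌊(l+r)/2⌋`. -/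
inductive MidNode : ℕ → ℕ → ℕ → ℕ → Prop where
  | refl (l r : ℕ) : MidNode l r l r
  | left {l r a b : ℕ} : l < r → MidNode l ((l + r) / 2) a b → MidNode l r a b
  | right {l r a b : ℕ} : l < r → MidNode ((l + r) / 2 + 1) r a b → MidNode l r a b

lemma Nat.clog_two_add_one_le {m n : ℕ} (hn : 2 ≤ n) (hm : 2 * m ≤ n + 1) :
    Nat.clog 2 m + 1 ≤ Nat.clog 2 n := by
  rw [Nat.clog_of_two_le one_lt_two hn]
  exact Nat.add_le_add_right (Nat.clog_mono_right 2 (by omega)) 1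

lemma clog_two_size_left_child_add_one_le {l r : ℕ} (hlr : l < r) :
    Nat.clog 2 ((l + r) / 2 + 1 - l) + 1 ≤ Nat.clog 2 (r + 1 - l) :=
  Nat.clog_two_add_one_le (by omega) (by omega)

lemma clog_two_size_right_child_add_one_le {l r : ℕ} (hlr : l < r) :
    Nat.clog 2 (r + 1 - ((l + r) / 2 + 1)) + 1 ≤ Nat.clog 2 (r + 1 - l) :=
  Nat.clog_two_add_one_le (by omega) (by omega)

structure IsTiling (a b : ℕ) (L : List (ℕ × ℕ)) : Prop where
  ne_nil : L ≠ []
  head?_fst : L.head?.map Prod.fst = some a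
  getLast?_snd : L.getLast?.map Prod.snd = some b
  chain : List.IsChain (fun p q : ℕ × ℕ => q.1 = p.2 + 1) L
  fst_le_snd : ∀ p ∈ L, p.1 ≤ p.2

namespace IsTiling

lemma singleton {a b : ℕ} (hab : a ≤ b) : IsTiling a b [(a, b)] where
  ne_nil := List.cons_ne_nil _ _
  head?_fst := rfl
  getLast?_snd := rfl
  chain := List.isChain_singleton _
  fst_le_snd := by simpa using hab

lemma append {a m b : ℕ} {L₁ L₂ : List (ℕ × ℕ)} (h₁ : IsTiling a m L₁)
    (h₂ : IsTiling (m + 1) b L₂) : IsTiling a b (L₁ ++ L₂) where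
  ne_nil := by simp [h₁.ne_nil]
  head?_fst := by rw [List.head?_append_of_ne_nil _ h₁.ne_nil, h₁.head?_fst]
  getLast?_snd := by rw [List.getLast?_append_of_ne_nil _ h₂.ne_nil, h₂.getLast?_snd]
  chain := by
    refine List.isChain_append.2 ⟨h₁.chain, h₂.chain, fun x hx y hy => ?_⟩
    have hx₂ : some x.2 = some m := by rw [← h₁.getLast?_snd, Option.mem_def.1 hx]; rfl
    have hy₁ : some y.1 = some (m + 1) := by rw [← h₂.head?_fst, Option.mem_def.1 hy]; rfl
    simp only [Option.some.injEq] at hx₂ hy₁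
    omega
  fst_le_snd p hp := (List.mem_append.1 hp).elim (h₁.fst_le_snd p) (h₂.fst_le_snd p)

end IsTiling

def NodeTileable (l r a b k : ℕ) : Prop :=
  ∃ L, IsTiling a b L ∧ (∀ p ∈ L, MidNode l r p.1 p.2) ∧ L.length ≤ k

namespace NodeTileable

variable {l r a m b k k₁ k₂ : ℕ}

lemma of_midNode (h : MidNode l r a b) (hab : a ≤ b) (hk : 1 ≤ k) : NodeTileable l r a b k :=
  ⟨[(a, b)], .singleton hab, by simpa using h, hk⟩

lemma mono (h : NodeTileable l r a b k₁) (hk : k₁ ≤ k₂) : NodeTileable l r a b k₂ :=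
  let ⟨L, hL, hnodes, hlen⟩ := h
  ⟨L, hL, hnodes, hlen.trans hk⟩

lemma append (h₁ : NodeTileable l r a m k₁) (h₂ : NodeTileable l r (m + 1) b k₂) :
    NodeTileable l r a b (k₁ + k₂) :=
  let ⟨L₁, hL₁, hnodes₁, hlen₁⟩ := h₁
  let ⟨L₂, hL₂, hnodes₂, hlen₂⟩ := h₂
  ⟨L₁ ++ L₂, hL₁.append hL₂, fun p hp => (List.mem_append.1 hp).elim (hnodes₁ p) (hnodes₂ p),
    by simpa using Nat.add_le_add hlen₁ hlen₂⟩

lemma of_left (hlr : l < r) (h : NodeTileable l ((l + r) / 2) a b k) : NodeTileable l r a b k :=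
  let ⟨L, hL, hnodes, hlen⟩ := h
  ⟨L, hL, fun p hp => .left hlr (hnodes p hp), hlen⟩

lemma of_right (hlr : l < r) (h : NodeTileable ((l + r) / 2 + 1) r a b k) :
    NodeTileable l r a b k :=
  let ⟨L, hL, hnodes, hlen⟩ := h
  ⟨L, hL, fun p hp => .right hlr (hnodes p hp), hlen⟩

theorem suffix_query {l r a : ℕ} (hla : l ≤ a) (har : a ≤ r) :
    NodeTileable l r a r (Nat.clog 2 (r + 1 - l) + 1) := by
  rcases hla.eq_or_lt with rfl | hla
  · exact of_midNode (.refl _ _) har (by omega)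
  have hlr : l < r := hla.trans_le har
  have hleft := clog_two_size_left_child_add_one_le hlr
  have hright := clog_two_size_right_child_add_one_le hlr
  rcases le_or_gt a ((l + r) / 2) with ham | hma
  · have hwhole : NodeTileable l r ((l + r) / 2 + 1) r 1 :=
      of_midNode (.right hlr (.refl _ _)) (by omega) le_rfl
    exact ((of_left hlr (suffix_query hla.le ham)).append hwhole).mono (by omega)
  · exact (of_right hlr (suffix_query hma har)).mono (by omega)
termination_by r - l

theorem prefix_query {l r b : ℕ} (hlb : l ≤ b) (hbr : b ≤ r) :
    NodeTileable l r l b (Nat.clog 2 (r + 1 - l) + 1) := by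
  rcases hbr.eq_or_lt with rfl | hbr
  · exact of_midNode (.refl _ _) hlb (by omega)
  have hlr : l < r := hlb.trans_lt hbr
  have hleft := clog_two_size_left_child_add_one_le hlr
  have hright := clog_two_size_right_child_add_one_le hlr
  rcases le_or_gt b ((l + r) / 2) with hbm | hmb
  · exact (of_left hlr (prefix_query hlb hbm)).mono (by omega)
  · have hwhole : NodeTileable l r l ((l + r) / 2) 1 :=
      of_midNode (.left hlr (.refl _ _)) (by omega) le_rfl
    exact (hwhole.append (of_right hlr (prefix_query hmb hbr.le))).mono (by omega)
termination_by r - l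

theorem interval_query {l r a b : ℕ} (hla : l ≤ a) (hab : a ≤ b) (hbr : b ≤ r) :
    NodeTileable l r a b (2 * Nat.clog 2 (r + 1 - l) + 2) := by
  rcases (hla.trans (hab.trans hbr)).eq_or_lt with hlr | hlr
  · obtain ⟨rfl, rfl, rfl⟩ : a = l ∧ b = l ∧ r = l := by omega
    exact of_midNode (.refl _ _) hab (by omega)
  have hleft := clog_two_size_left_child_add_one_le hlr
  have hright := clog_two_size_right_child_add_one_le hlr
  rcases le_or_gt b ((l + r) / 2) with hbm | hmb
  · exact (of_left hlr (interval_query hla hab hbm)).mono (by omega)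
  rcases le_or_gt a ((l + r) / 2) with ham | hma
  · have hsuffix := of_left hlr (suffix_query hla ham)
    have hprefix := of_right hlr (prefix_query hmb hbr)
    exact (hsuffix.append hprefix).mono (by omega)
  · exact (of_right hlr (interval_query hma hab hbr)).mono (by omega)
termination_by r - l

end NodeTileable

/-- Decomposition of any interval into tree ranges: for `1 ≤ a ≤ b ≤ n`, the
interval `[a,b]` is the disjoint concatenation, in increasing order, of at most
`2⌈log₂ n⌉ + 2` ranges, each of which labels a node of the range tree over
`[1,n]` built with `mid(l,r) = ⌊(l+r)/2⌋`. -/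
theorem interval_decomposition (n a b : ℕ) (ha : 1 ≤ a) (hab : a ≤ b) (hb : b ≤ n) :
    ∃ L : List (ℕ × ℕ),
      L ≠ [] ∧
      (∀ p ∈ L, MidNode 1 n p.1 p.2) ∧
      (L.head?.map Prod.fst = some a) ∧
      (L.getLast?.map Prod.snd = some b) ∧
      List.Chain' (fun p q : ℕ × ℕ => q.1 = p.2 + 1) L ∧
      (∀ p ∈ L, p.1 ≤ p.2) ∧
      L.length ≤ 2 * Nat.clog 2 n + 2 := by
  obtain ⟨L, hL, hnodes, hlen⟩ := NodeTileable.interval_query ha hab hb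
  rw [Nat.add_sub_cancel] at hlen
  exact ⟨L, hL.ne_nil, hnodes, hL.head?_fst, hL.getLast?_snd, hL.chain, hL.fst_le_snd, hlen⟩
end
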